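/- A Sylow 2-subgroup of SL(2, ℤ/5ℤ) is not isomorphic to ℤ/2 × ℤ/2 (in fact it contains an element of order 4). -/
import Mathlib

instance : DecidableEq (Matrix.SpecialLinearGroup (Fin 2) (ZMod 5)) :=
  fun a b => decidable_of_iff (a.1 = b.1) Subtype.ext_iff.symm

set_option maxRecDepth 10000 in
lemma cardSL25 : Nat.card (Matrix.SpecialLinearGroup (Fin 2) (ZMod 5)) = 120 := by
  rw [Nat.card_eq_fintype_card]; decide

def jmat : Matrix.SpecialLinearGroup (Fin 2) (ZMod 5) := ⟨!![0, -1; 1, 0], by decide⟩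

lemma order_jmat : orderOf jmat = 4 := by
  have h2 : ¬ jmat ^ 2 ^ 1 = 1 := by decide
  have h4 : jmat ^ 2 ^ 2 = 1 := by decide
  exact orderOf_eq_prime_pow h2 h4

lemma fact120 : (Nat.factorization 120) 2 = 3 := by
  rw [show (120:ℕ) = 2^3*15 from rfl,
    Nat.factorization_mul (by norm_num) (by norm_num), Finsupp.add_apply,
    Nat.factorization_pow, Finsupp.smul_apply,
    Nat.Prime.factorization Nat.prime_two, Finsupp.single_eq_same,
    Nat.factorization_eq_zero_of_not_dvd (by norm_num)]
  norm_num

/-- A Sylow 2-subgroup of `SL(2, ℤ/5ℤ)` is not isomorphic to `ℤ/2 × ℤ/2`;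
in fact it contains an element of order 4. -/
theorem sylow_two_sl2_zmod5 (P : Sylow 2 (Matrix.SpecialLinearGroup (Fin 2) (ZMod 5))) :
    (¬ Nonempty ((P : Subgroup (Matrix.SpecialLinearGroup (Fin 2) (ZMod 5))) ≃*
        Multiplicative (ZMod 2 × ZMod 2))) ∧
      ∃ g : (P : Subgroup (Matrix.SpecialLinearGroup (Fin 2) (ZMod 5))), orderOf g = 4 := by
  set G := Matrix.SpecialLinearGroup (Fin 2) (ZMod 5)
  have hcardP : Nat.card (P : Subgroup G) = 8 := by
    rw [P.card_eq_multiplicity, cardSL25, fact120]; norm_num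
  constructor
  · rintro ⟨e⟩
    have h := Nat.card_congr e.toEquiv
    rw [hcardP] at h
    simp [Nat.card_eq_fintype_card] at h
  · have hpg : IsPGroup 2 (Subgroup.zpowers jmat) :=
      IsPGroup.of_card (n := 2) (by rw [Nat.card_zpowers, order_jmat]; norm_num)
    obtain ⟨Q, hQ⟩ := hpg.exists_le_sylow
    obtain ⟨x, hx⟩ := MulAction.exists_smul_eq G Q P
    have hj : jmat ∈ (Q : Subgroup G) := hQ (Subgroup.mem_zpowers jmat)
    have hmem : x * jmat * x⁻¹ ∈ (P : Subgroup G) := by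
      rw [← hx, Sylow.coe_subgroup_smul]
      exact Subgroup.smul_mem_pointwise_smul jmat (MulAut.conj x) _ hj
    refine ⟨⟨x * jmat * x⁻¹, hmem⟩, ?_⟩
    rw [Subgroup.orderOf_mk, show x * jmat * x⁻¹ = (MulAut.conj x) jmat from rfl,
      (MulAut.conj x).orderOf_eq jmat, order_jmat]
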